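/- Let ρ > 0 and ν be real constants, and let u_p, u_w : ℝ × ℝ³ → ℝ³, p, φ : ℝ × ℝ³ → ℝ be twice continuously differentiable. Write u = u_p + u_w, let w = ∇ × u denote the spatial curl of u, let ∇ denote the spatial gradient, ∇² the sum of the three second spatial partial derivatives applied componentwise, and (u·∇)u the vector with i-th component u₁·∂uᵢ/∂x + u₂·∂uᵢ/∂y + u₃·∂uᵢ/∂z. Assume that at every point (t, x, y, z): (i) ∇ × u_p = 0 and ∇·u_p = 0 and ∇·u_w = 0; (ii) (1/2)·∇(|u|²) + ∇p/ρ + ∇φ = 0; (iii) ∂u_p/∂t = u_p × w + u_w × w; (iv) ∂u_w/∂t = ν·∇²u_w. Then u satisfies at every point the incompressible Navier–Stokes momentum equation ∂u/∂t + (u·∇)u = −∇p/ρ + ν·∇²u − ∇φ, together with the continuity equation ∇·u = 0. -/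

import Mathlib

/-- Partial derivative with respect to time of a function of `(t, x, y, z)`. -/
noncomputable def pT (f : ℝ → ℝ → ℝ → ℝ → ℝ) (t x y z : ℝ) : ℝ :=
  deriv (fun s => f s x y z) t

/-- Partial derivative with respect to `x`. -/
noncomputable def pX (f : ℝ → ℝ → ℝ → ℝ → ℝ) (t x y z : ℝ) : ℝ :=
  deriv (fun x' => f t x' y z) x

/-- Partial derivative with respect to `y`. -/
noncomputable def pY (f : ℝ → ℝ → ℝ → ℝ → ℝ) (t x y z : ℝ) : ℝ :=
  deriv (fun y' => f t x y' z) y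

/-- Partial derivative with respect to `z`. -/
noncomputable def pZ (f : ℝ → ℝ → ℝ → ℝ → ℝ) (t x y z : ℝ) : ℝ :=
  deriv (fun z' => f t x y z') z

/-- Spatial Laplacian `∂²f/∂x² + ∂²f/∂y² + ∂²f/∂z²`. -/
noncomputable def lap (f : ℝ → ℝ → ℝ → ℝ → ℝ) (t x y z : ℝ) : ℝ :=
  deriv (deriv (fun x' => f t x' y z)) x
    + deriv (deriv (fun y' => f t x y' z)) y
    + deriv (deriv (fun z' => f t x y z')) z

/-- `f` is `C²` as a function of `(t, x, y, z)` jointly. -/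
def IsC2 (f : ℝ → ℝ → ℝ → ℝ → ℝ) : Prop :=
  ContDiff ℝ 2 (fun q : ℝ × ℝ × ℝ × ℝ => f q.1 q.2.1 q.2.2.1 q.2.2.2)

/-!
Adding (iii) and (iv) gives `∂u/∂t = u × w + ν ∇²u_w`. Since `u_p` is curl- and
divergence-free, symmetry of second derivatives gives `∂ⱼ∂ⱼ u_pᵢ = ∂ᵢ∂ⱼ u_pⱼ`, so
`∇²u_p = ∇(∇·u_p) = 0` and `∇²u_w = ∇²u`. The Lamb identity `(u·∇)u = ½ ∇|u|² − u × w`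
together with (ii) turns this into the momentum equation, and `∇·u = 0` is linearity of the
divergence.
-/

section LineDerivatives

variable {E F : Type*} [NormedAddCommGroup E] [NormedSpace ℝ E]
  [NormedAddCommGroup F] [NormedSpace ℝ F]

theorem hasFDerivAt_fderiv_apply {g : E → F} (hg : ContDiff ℝ 2 g) (v x : E) :
    HasFDerivAt (fun y => fderiv ℝ g y v)
      ((ContinuousLinearMap.apply ℝ F v).comp (fderiv ℝ (fderiv ℝ g) x)) x :=
  (ContinuousLinearMap.apply ℝ F v).hasFDerivAt.comp x
    ((hg.fderiv_right (m := 1) le_rfl).differentiable one_ne_zero x).hasFDerivAt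

theorem fderiv_fderiv_apply {g : E → F} (hg : ContDiff ℝ 2 g) (v x w : E) :
    fderiv ℝ (fun y => fderiv ℝ g y v) x w = fderiv ℝ (fderiv ℝ g) x w v := by
  rw [(hasFDerivAt_fderiv_apply hg v x).fderiv]
  rfl

theorem deriv_comp_eq_fderiv {g : E → F} (hg : Differentiable ℝ g) {γ : ℝ → E} {v : E}
    (hγ : ∀ s, HasDerivAt γ v s) : deriv (g ∘ γ) = fun s => fderiv ℝ g (γ s) v :=
  funext fun s => ((hg (γ s)).hasFDerivAt.comp_hasDerivAt s (hγ s)).deriv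

theorem deriv_deriv_comp_eq_fderiv_fderiv {g : E → F} (hg : ContDiff ℝ 2 g) {γ : ℝ → E} {v : E}
    (hγ : ∀ s, HasDerivAt γ v s) (s : ℝ) :
    deriv (deriv (g ∘ γ)) s = fderiv ℝ (fderiv ℝ g) (γ s) v v := by
  rw [deriv_comp_eq_fderiv (hg.differentiable two_ne_zero) hγ]
  exact ((hasFDerivAt_fderiv_apply hg v (γ s)).comp_hasDerivAt s (hγ s)).deriv

theorem sum_fderiv_fderiv_diag_eq_zero {ι : Type*} [Fintype ι] {p : ι → E → ℝ}
    (hp : ∀ i, ContDiff ℝ 2 (p i)) (e : ι → E)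
    (hcurl : ∀ i j x, fderiv ℝ (p i) x (e j) = fderiv ℝ (p j) x (e i))
    (hdiv : ∀ x, ∑ j, fderiv ℝ (p j) x (e j) = 0) (i : ι) (x : E) :
    ∑ j, fderiv ℝ (fderiv ℝ (p i)) x (e j) (e j) = 0 := by
  have hD2_div : ∑ j, (ContinuousLinearMap.apply ℝ ℝ (e j)).comp
      (fderiv ℝ (fderiv ℝ (p j)) x) = 0 := by
    have h := HasFDerivAt.fun_sum (u := Finset.univ) fun j _ =>
      hasFDerivAt_fderiv_apply (hp j) (e j) x
    rw [show (fun y => ∑ j, fderiv ℝ (p j) y (e j)) = fun _ => 0 from funext hdiv] at h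
    exact h.unique (hasFDerivAt_const 0 x)
  calc ∑ j, fderiv ℝ (fderiv ℝ (p i)) x (e j) (e j)
      = ∑ j, fderiv ℝ (fderiv ℝ (p j)) x (e j) (e i) := by
        refine Finset.sum_congr rfl fun j _ => ?_
        rw [← fderiv_fderiv_apply (hp i), ← fderiv_fderiv_apply (hp j)]
        simp_rw [hcurl i j]
    _ = ∑ j, fderiv ℝ (fderiv ℝ (p j)) x (e i) (e j) := by
        refine Finset.sum_congr rfl fun j _ => ?_
        exact (hp j).contDiffAt.isSymmSndFDerivAt (by simp) _ _
    _ = 0 := by simpa using congrArg (fun L => L (e i)) hD2_div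

end LineDerivatives

theorem deriv_sq_add_sq_add_sq {a b c : ℝ → ℝ} {a' b' c' s : ℝ} (ha : HasDerivAt a a' s)
    (hb : HasDerivAt b b' s) (hc : HasDerivAt c c' s) :
    deriv (fun s => a s ^ 2 + b s ^ 2 + c s ^ 2) s = 2 * (a s * a' + b s * b' + c s * c') := by
  rw [((ha.fun_pow 2).fun_add (hb.fun_pow 2)).fun_add (hc.fun_pow 2) |>.deriv]
  ring

section Coordinates

def uncurry4 (f : ℝ → ℝ → ℝ → ℝ → ℝ) (q : ℝ × ℝ × ℝ × ℝ) : ℝ :=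
  f q.1 q.2.1 q.2.2.1 q.2.2.2

def spaceDir : Fin 3 → ℝ × ℝ × ℝ × ℝ :=
  ![(0, 1, 0, 0), (0, 0, 1, 0), (0, 0, 0, 1)]

theorem hasDerivAt_lineX (t y z x : ℝ) :
    HasDerivAt (fun x' => ((t, x', y, z) : ℝ × ℝ × ℝ × ℝ)) (spaceDir 0) x :=
  (hasDerivAt_const x t).prodMk ((hasDerivAt_id x).prodMk (hasDerivAt_const x (y, z)))

theorem hasDerivAt_lineY (t x z y : ℝ) :
    HasDerivAt (fun y' => ((t, x, y', z) : ℝ × ℝ × ℝ × ℝ)) (spaceDir 1) y :=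
  (hasDerivAt_const y t).prodMk
    ((hasDerivAt_const y x).prodMk ((hasDerivAt_id y).prodMk (hasDerivAt_const y z)))

theorem hasDerivAt_lineZ (t x y z : ℝ) :
    HasDerivAt (fun z' => ((t, x, y, z') : ℝ × ℝ × ℝ × ℝ)) (spaceDir 2) z :=
  (hasDerivAt_const z t).prodMk
    ((hasDerivAt_const z x).prodMk ((hasDerivAt_const z y).prodMk (hasDerivAt_id z)))

variable {f g h : ℝ → ℝ → ℝ → ℝ → ℝ}

theorem IsC2.contDiff (hf : IsC2 f) : ContDiff ℝ 2 (uncurry4 f) := hf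

theorem IsC2.differentiable (hf : IsC2 f) : Differentiable ℝ (uncurry4 f) :=
  hf.contDiff.differentiable two_ne_zero

theorem IsC2.differentiable_fderiv (hf : IsC2 f) : Differentiable ℝ (fderiv ℝ (uncurry4 f)) :=
  (hf.contDiff.fderiv_right (m := 1) le_rfl).differentiable one_ne_zero

theorem isC2_of_eq_add (hf : IsC2 f) (hg : IsC2 g)
    (hh : ∀ t x y z, h t x y z = f t x y z + g t x y z) : IsC2 h := by
  have hsum : uncurry4 h = uncurry4 f + uncurry4 g := funext fun _ => hh _ _ _ _
  show ContDiff ℝ 2 (uncurry4 h)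
  exact hsum ▸ hf.contDiff.add hg.contDiff

theorem IsC2.hasDerivAt_pT (hf : IsC2 f) (t x y z : ℝ) :
    HasDerivAt (fun s => f s x y z) (pT f t x y z) t :=
  ((hf.differentiable _).comp t
    (by fun_prop : DifferentiableAt ℝ (fun s : ℝ => (s, x, y, z)) t)).hasDerivAt

theorem IsC2.hasDerivAt_pX (hf : IsC2 f) (t x y z : ℝ) :
    HasDerivAt (fun x' => f t x' y z) (pX f t x y z) x :=
  ((hf.differentiable _).comp x (hasDerivAt_lineX t y z x).differentiableAt).hasDerivAt

theorem IsC2.hasDerivAt_pY (hf : IsC2 f) (t x y z : ℝ) :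
    HasDerivAt (fun y' => f t x y' z) (pY f t x y z) y :=
  ((hf.differentiable _).comp y (hasDerivAt_lineY t x z y).differentiableAt).hasDerivAt

theorem IsC2.hasDerivAt_pZ (hf : IsC2 f) (t x y z : ℝ) :
    HasDerivAt (fun z' => f t x y z') (pZ f t x y z) z :=
  ((hf.differentiable _).comp z (hasDerivAt_lineZ t x y z).differentiableAt).hasDerivAt

theorem IsC2.pX_eq_fderiv (hf : IsC2 f) (t x y z : ℝ) :
    pX f t x y z = fderiv ℝ (uncurry4 f) (t, x, y, z) (spaceDir 0) :=
  congrFun (deriv_comp_eq_fderiv hf.differentiable (hasDerivAt_lineX t y z)) x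

theorem IsC2.pY_eq_fderiv (hf : IsC2 f) (t x y z : ℝ) :
    pY f t x y z = fderiv ℝ (uncurry4 f) (t, x, y, z) (spaceDir 1) :=
  congrFun (deriv_comp_eq_fderiv hf.differentiable (hasDerivAt_lineY t x z)) y

theorem IsC2.pZ_eq_fderiv (hf : IsC2 f) (t x y z : ℝ) :
    pZ f t x y z = fderiv ℝ (uncurry4 f) (t, x, y, z) (spaceDir 2) :=
  congrFun (deriv_comp_eq_fderiv hf.differentiable (hasDerivAt_lineZ t x y)) z

theorem IsC2.lap_eq_sum (hf : IsC2 f) (t x y z : ℝ) :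
    lap f t x y z =
      ∑ j, fderiv ℝ (fderiv ℝ (uncurry4 f)) (t, x, y, z) (spaceDir j) (spaceDir j) := by
  rw [Fin.sum_univ_three]
  exact congrArg₂ (· + ·) (congrArg₂ (· + ·)
    (deriv_deriv_comp_eq_fderiv_fderiv hf (hasDerivAt_lineX t y z) x)
    (deriv_deriv_comp_eq_fderiv_fderiv hf (hasDerivAt_lineY t x z) y))
    (deriv_deriv_comp_eq_fderiv_fderiv hf (hasDerivAt_lineZ t x y) z)

section Additivity

variable (hf : IsC2 f) (hg : IsC2 g) (hh : ∀ t x y z, h t x y z = f t x y z + g t x y z)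
include hf hg hh

theorem pT_of_eq_add (t x y z : ℝ) : pT h t x y z = pT f t x y z + pT g t x y z :=
  ((hf.hasDerivAt_pT t x y z).add (hg.hasDerivAt_pT t x y z)).congr_of_eventuallyEq
    (.of_forall fun s => hh s x y z) |>.deriv

theorem pX_of_eq_add (t x y z : ℝ) : pX h t x y z = pX f t x y z + pX g t x y z :=
  ((hf.hasDerivAt_pX t x y z).add (hg.hasDerivAt_pX t x y z)).congr_of_eventuallyEq
    (.of_forall fun x' => hh t x' y z) |>.deriv

theorem pY_of_eq_add (t x y z : ℝ) : pY h t x y z = pY f t x y z + pY g t x y z :=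
  ((hf.hasDerivAt_pY t x y z).add (hg.hasDerivAt_pY t x y z)).congr_of_eventuallyEq
    (.of_forall fun y' => hh t x y' z) |>.deriv

theorem pZ_of_eq_add (t x y z : ℝ) : pZ h t x y z = pZ f t x y z + pZ g t x y z :=
  ((hf.hasDerivAt_pZ t x y z).add (hg.hasDerivAt_pZ t x y z)).congr_of_eventuallyEq
    (.of_forall fun z' => hh t x y z') |>.deriv

theorem lap_of_eq_add (t x y z : ℝ) : lap h t x y z = lap f t x y z + lap g t x y z := by
  have hsum : uncurry4 h = uncurry4 f + uncurry4 g := funext fun _ => hh _ _ _ _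
  have hD : fderiv ℝ (uncurry4 h) = fderiv ℝ (uncurry4 f) + fderiv ℝ (uncurry4 g) :=
    funext fun q => hsum ▸ fderiv_add (hf.differentiable q) (hg.differentiable q)
  have hD2 : fderiv ℝ (fderiv ℝ (uncurry4 h)) (t, x, y, z) =
      fderiv ℝ (fderiv ℝ (uncurry4 f)) (t, x, y, z) + fderiv ℝ (fderiv ℝ (uncurry4 g)) (t, x, y, z) := by
    rw [hD]
    exact fderiv_add (hf.differentiable_fderiv _) (hg.differentiable_fderiv _)
  rw [(isC2_of_eq_add hf hg hh).lap_eq_sum, hf.lap_eq_sum, hg.lap_eq_sum, hD2,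
    ← Finset.sum_add_distrib]
  rfl

end Additivity

section NormSq

variable {u₁ u₂ u₃ : ℝ → ℝ → ℝ → ℝ → ℝ} (h₁ : IsC2 u₁) (h₂ : IsC2 u₂) (h₃ : IsC2 u₃)
include h₁ h₂ h₃

theorem pX_sq_add_sq_add_sq (t x y z : ℝ) :
    pX (fun t x y z => u₁ t x y z ^ 2 + u₂ t x y z ^ 2 + u₃ t x y z ^ 2) t x y z =
      2 * (u₁ t x y z * pX u₁ t x y z + u₂ t x y z * pX u₂ t x y z
        + u₃ t x y z * pX u₃ t x y z) :=
  deriv_sq_add_sq_add_sq (h₁.hasDerivAt_pX t x y z) (h₂.hasDerivAt_pX t x y z)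
    (h₃.hasDerivAt_pX t x y z)

theorem pY_sq_add_sq_add_sq (t x y z : ℝ) :
    pY (fun t x y z => u₁ t x y z ^ 2 + u₂ t x y z ^ 2 + u₃ t x y z ^ 2) t x y z =
      2 * (u₁ t x y z * pY u₁ t x y z + u₂ t x y z * pY u₂ t x y z
        + u₃ t x y z * pY u₃ t x y z) :=
  deriv_sq_add_sq_add_sq (h₁.hasDerivAt_pY t x y z) (h₂.hasDerivAt_pY t x y z)
    (h₃.hasDerivAt_pY t x y z)

theorem pZ_sq_add_sq_add_sq (t x y z : ℝ) :
    pZ (fun t x y z => u₁ t x y z ^ 2 + u₂ t x y z ^ 2 + u₃ t x y z ^ 2) t x y z =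
      2 * (u₁ t x y z * pZ u₁ t x y z + u₂ t x y z * pZ u₂ t x y z
        + u₃ t x y z * pZ u₃ t x y z) :=
  deriv_sq_add_sq_add_sq (h₁.hasDerivAt_pZ t x y z) (h₂.hasDerivAt_pZ t x y z)
    (h₃.hasDerivAt_pZ t x y z)

end NormSq

theorem lap_eq_zero_of_curl_eq_zero_of_div_eq_zero {p₁ p₂ p₃ : ℝ → ℝ → ℝ → ℝ → ℝ}
    (h₁ : IsC2 p₁) (h₂ : IsC2 p₂) (h₃ : IsC2 p₃)
    (hcurl₁ : ∀ t x y z : ℝ, pY p₃ t x y z - pZ p₂ t x y z = 0)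
    (hcurl₂ : ∀ t x y z : ℝ, pZ p₁ t x y z - pX p₃ t x y z = 0)
    (hcurl₃ : ∀ t x y z : ℝ, pX p₂ t x y z - pY p₁ t x y z = 0)
    (hdiv : ∀ t x y z : ℝ, pX p₁ t x y z + pY p₂ t x y z + pZ p₃ t x y z = 0)
    (t x y z : ℝ) : lap p₁ t x y z = 0 ∧ lap p₂ t x y z = 0 ∧ lap p₃ t x y z = 0 := by
  have hp : ∀ i, IsC2 (![p₁, p₂, p₃] i) := by
    intro i
    fin_cases i <;> assumption
  suffices h : ∀ i, lap (![p₁, p₂, p₃] i) t x y z = 0 from ⟨h 0, h 1, h 2⟩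
  intro i
  rw [(hp i).lap_eq_sum]
  refine sum_fderiv_fderiv_diag_eq_zero (fun i => (hp i).contDiff) spaceDir ?_ ?_ i _
  · rintro i j ⟨t', x', y', z'⟩
    have c₁ := hcurl₁ t' x' y' z'
    have c₂ := hcurl₂ t' x' y' z'
    have c₃ := hcurl₃ t' x' y' z'
    fin_cases i <;> fin_cases j <;>
      simp only [Nat.succ_eq_add_one, Nat.reduceAdd, Fin.zero_eta, Fin.mk_one, Fin.reduceFinMk,
        Fin.isValue, Matrix.cons_val_zero, Matrix.cons_val_one, Matrix.cons_val,
        ← h₁.pX_eq_fderiv, ← h₁.pY_eq_fderiv, ← h₁.pZ_eq_fderiv,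
        ← h₂.pX_eq_fderiv, ← h₂.pY_eq_fderiv, ← h₂.pZ_eq_fderiv,
        ← h₃.pX_eq_fderiv, ← h₃.pY_eq_fderiv, ← h₃.pZ_eq_fderiv] <;> linarith
  · rintro ⟨t', x', y', z'⟩
    rw [Fin.sum_univ_three]
    have := hdiv t' x' y' z'
    rw [h₁.pX_eq_fderiv, h₂.pY_eq_fderiv, h₃.pZ_eq_fderiv] at this
    exact this

end Coordinates

theorem decomposition_solves_navier_stokes_general
    (ρ ν : ℝ)
    (up₁ up₂ up₃ uw₁ uw₂ uw₃ P φ : ℝ → ℝ → ℝ → ℝ → ℝ)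
    (hup₁ : IsC2 up₁) (hup₂ : IsC2 up₂) (hup₃ : IsC2 up₃)
    (huw₁ : IsC2 uw₁) (huw₂ : IsC2 uw₂) (huw₃ : IsC2 uw₃)
    -- the total velocity `u = u_p + u_w`
    (u₁ u₂ u₃ : ℝ → ℝ → ℝ → ℝ → ℝ)
    (hu₁ : ∀ t x y z : ℝ, u₁ t x y z = up₁ t x y z + uw₁ t x y z)
    (hu₂ : ∀ t x y z : ℝ, u₂ t x y z = up₂ t x y z + uw₂ t x y z)
    (hu₃ : ∀ t x y z : ℝ, u₃ t x y z = up₃ t x y z + uw₃ t x y z)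
    -- the vorticity `w = ∇ × u`
    (w₁ w₂ w₃ : ℝ → ℝ → ℝ → ℝ → ℝ)
    (hw₁ : ∀ t x y z : ℝ, w₁ t x y z = pY u₃ t x y z - pZ u₂ t x y z)
    (hw₂ : ∀ t x y z : ℝ, w₂ t x y z = pZ u₁ t x y z - pX u₃ t x y z)
    (hw₃ : ∀ t x y z : ℝ, w₃ t x y z = pX u₂ t x y z - pY u₁ t x y z)
    -- (i) `∇ × u_p = 0`, `∇ · u_p = 0`, `∇ · u_w = 0`
    (hcurlp₁ : ∀ t x y z : ℝ, pY up₃ t x y z - pZ up₂ t x y z = 0)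
    (hcurlp₂ : ∀ t x y z : ℝ, pZ up₁ t x y z - pX up₃ t x y z = 0)
    (hcurlp₃ : ∀ t x y z : ℝ, pX up₂ t x y z - pY up₁ t x y z = 0)
    (hdivp : ∀ t x y z : ℝ,
      pX up₁ t x y z + pY up₂ t x y z + pZ up₃ t x y z = 0)
    (hdivw : ∀ t x y z : ℝ,
      pX uw₁ t x y z + pY uw₂ t x y z + pZ uw₃ t x y z = 0)
    -- (ii) `(1/2)·∇(|u|²) + ∇p/ρ + ∇φ = 0`
    (hbern₁ : ∀ t x y z : ℝ,
      (1 / 2) * pX (fun t x y z =>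
          (u₁ t x y z) ^ 2 + (u₂ t x y z) ^ 2 + (u₃ t x y z) ^ 2) t x y z
        + pX P t x y z / ρ + pX φ t x y z = 0)
    (hbern₂ : ∀ t x y z : ℝ,
      (1 / 2) * pY (fun t x y z =>
          (u₁ t x y z) ^ 2 + (u₂ t x y z) ^ 2 + (u₃ t x y z) ^ 2) t x y z
        + pY P t x y z / ρ + pY φ t x y z = 0)
    (hbern₃ : ∀ t x y z : ℝ,
      (1 / 2) * pZ (fun t x y z =>
          (u₁ t x y z) ^ 2 + (u₂ t x y z) ^ 2 + (u₃ t x y z) ^ 2) t x y z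
        + pZ P t x y z / ρ + pZ φ t x y z = 0)
    -- (iii) `∂u_p/∂t = u_p × w + u_w × w`
    (hrot₁ : ∀ t x y z : ℝ,
      pT up₁ t x y z =
        (up₂ t x y z * w₃ t x y z - up₃ t x y z * w₂ t x y z)
          + (uw₂ t x y z * w₃ t x y z - uw₃ t x y z * w₂ t x y z))
    (hrot₂ : ∀ t x y z : ℝ,
      pT up₂ t x y z =
        (up₃ t x y z * w₁ t x y z - up₁ t x y z * w₃ t x y z)
          + (uw₃ t x y z * w₁ t x y z - uw₁ t x y z * w₃ t x y z))
    (hrot₃ : ∀ t x y z : ℝ,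
      pT up₃ t x y z =
        (up₁ t x y z * w₂ t x y z - up₂ t x y z * w₁ t x y z)
          + (uw₁ t x y z * w₂ t x y z - uw₂ t x y z * w₁ t x y z))
    -- (iv) `∂u_w/∂t = ν·∇²u_w`
    (hdiff₁ : ∀ t x y z : ℝ, pT uw₁ t x y z = ν * lap uw₁ t x y z)
    (hdiff₂ : ∀ t x y z : ℝ, pT uw₂ t x y z = ν * lap uw₂ t x y z)
    (hdiff₃ : ∀ t x y z : ℝ, pT uw₃ t x y z = ν * lap uw₃ t x y z) :
    (∀ t x y z : ℝ,
      pT u₁ t x y z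
          + (u₁ t x y z * pX u₁ t x y z + u₂ t x y z * pY u₁ t x y z
              + u₃ t x y z * pZ u₁ t x y z) =
        -(pX P t x y z / ρ) + ν * lap u₁ t x y z - pX φ t x y z) ∧
    (∀ t x y z : ℝ,
      pT u₂ t x y z
          + (u₁ t x y z * pX u₂ t x y z + u₂ t x y z * pY u₂ t x y z
              + u₃ t x y z * pZ u₂ t x y z) =
        -(pY P t x y z / ρ) + ν * lap u₂ t x y z - pY φ t x y z) ∧
    (∀ t x y z : ℝ,
      pT u₃ t x y z
          + (u₁ t x y z * pX u₃ t x y z + u₂ t x y z * pY u₃ t x y z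
              + u₃ t x y z * pZ u₃ t x y z) =
        -(pZ P t x y z / ρ) + ν * lap u₃ t x y z - pZ φ t x y z) ∧
    (∀ t x y z : ℝ,
      pX u₁ t x y z + pY u₂ t x y z + pZ u₃ t x y z = 0) := by
  have hu₁C : IsC2 u₁ := isC2_of_eq_add hup₁ huw₁ hu₁
  have hu₂C : IsC2 u₂ := isC2_of_eq_add hup₂ huw₂ hu₂
  have hu₃C : IsC2 u₃ := isC2_of_eq_add hup₃ huw₃ hu₃
  have hlap := lap_eq_zero_of_curl_eq_zero_of_div_eq_zero hup₁ hup₂ hup₃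
    hcurlp₁ hcurlp₂ hcurlp₃ hdivp
  -- The `hu` terms regroup `u_p × w + u_w × w` from (iii) into `u × w`.
  refine ⟨fun t x y z => ?_, fun t x y z => ?_, fun t x y z => ?_, fun t x y z => ?_⟩
  · rw [pT_of_eq_add hup₁ huw₁ hu₁, lap_of_eq_add hup₁ huw₁ hu₁, (hlap t x y z).1,
      hrot₁, hdiff₁, hw₂, hw₃]
    linear_combination hbern₁ t x y z - pX_sq_add_sq_add_sq hu₁C hu₂C hu₃C t x y z / 2
      - (pX u₂ t x y z - pY u₁ t x y z) * hu₂ t x y z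
      + (pZ u₁ t x y z - pX u₃ t x y z) * hu₃ t x y z
  · rw [pT_of_eq_add hup₂ huw₂ hu₂, lap_of_eq_add hup₂ huw₂ hu₂, (hlap t x y z).2.1,
      hrot₂, hdiff₂, hw₃, hw₁]
    linear_combination hbern₂ t x y z - pY_sq_add_sq_add_sq hu₁C hu₂C hu₃C t x y z / 2
      - (pY u₃ t x y z - pZ u₂ t x y z) * hu₃ t x y z
      + (pX u₂ t x y z - pY u₁ t x y z) * hu₁ t x y z
  · rw [pT_of_eq_add hup₃ huw₃ hu₃, lap_of_eq_add hup₃ huw₃ hu₃, (hlap t x y z).2.2,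
      hrot₃, hdiff₃, hw₁, hw₂]
    linear_combination hbern₃ t x y z - pZ_sq_add_sq_add_sq hu₁C hu₂C hu₃C t x y z / 2
      - (pZ u₁ t x y z - pX u₃ t x y z) * hu₁ t x y z
      + (pY u₃ t x y z - pZ u₂ t x y z) * hu₂ t x y z
  · rw [pX_of_eq_add hup₁ huw₁ hu₁, pY_of_eq_add hup₂ huw₂ hu₂, pZ_of_eq_add hup₃ huw₃ hu₃]
    linear_combination hdivp t x y z + hdivw t x y z

/-- The decomposition (1.3)–(1.5): if `u_p` is curl-free and divergence-free, `u_w` is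
divergence-free, the Bernoulli-type equation (1.3), the rotation equation (1.4) (with
`f = u_w × w`) and the diffusion equation (1.5) hold, then `u = u_p + u_w` solves the
incompressible Navier–Stokes momentum equation with potential force `F = −∇φ`,
together with the continuity equation `∇·u = 0`. -/
theorem decomposition_solves_navier_stokes
    (ρ ν : ℝ) (hρ : 0 < ρ)
    (up₁ up₂ up₃ uw₁ uw₂ uw₃ P φ : ℝ → ℝ → ℝ → ℝ → ℝ)
    (hup₁ : IsC2 up₁) (hup₂ : IsC2 up₂) (hup₃ : IsC2 up₃)
    (huw₁ : IsC2 uw₁) (huw₂ : IsC2 uw₂) (huw₃ : IsC2 uw₃)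
    (hP : IsC2 P) (hφ : IsC2 φ)
    -- the total velocity `u = u_p + u_w`
    (u₁ u₂ u₃ : ℝ → ℝ → ℝ → ℝ → ℝ)
    (hu₁ : ∀ t x y z : ℝ, u₁ t x y z = up₁ t x y z + uw₁ t x y z)
    (hu₂ : ∀ t x y z : ℝ, u₂ t x y z = up₂ t x y z + uw₂ t x y z)
    (hu₃ : ∀ t x y z : ℝ, u₃ t x y z = up₃ t x y z + uw₃ t x y z)
    -- the vorticity `w = ∇ × u`
    (w₁ w₂ w₃ : ℝ → ℝ → ℝ → ℝ → ℝ)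
    (hw₁ : ∀ t x y z : ℝ, w₁ t x y z = pY u₃ t x y z - pZ u₂ t x y z)
    (hw₂ : ∀ t x y z : ℝ, w₂ t x y z = pZ u₁ t x y z - pX u₃ t x y z)
    (hw₃ : ∀ t x y z : ℝ, w₃ t x y z = pX u₂ t x y z - pY u₁ t x y z)
    -- (i) `∇ × u_p = 0`, `∇ · u_p = 0`, `∇ · u_w = 0`
    (hcurlp₁ : ∀ t x y z : ℝ, pY up₃ t x y z - pZ up₂ t x y z = 0)
    (hcurlp₂ : ∀ t x y z : ℝ, pZ up₁ t x y z - pX up₃ t x y z = 0)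
    (hcurlp₃ : ∀ t x y z : ℝ, pX up₂ t x y z - pY up₁ t x y z = 0)
    (hdivp : ∀ t x y z : ℝ,
      pX up₁ t x y z + pY up₂ t x y z + pZ up₃ t x y z = 0)
    (hdivw : ∀ t x y z : ℝ,
      pX uw₁ t x y z + pY uw₂ t x y z + pZ uw₃ t x y z = 0)
    -- (ii) `(1/2)·∇(|u|²) + ∇p/ρ + ∇φ = 0`
    (hbern₁ : ∀ t x y z : ℝ,
      (1 / 2) * pX (fun t x y z =>
          (u₁ t x y z) ^ 2 + (u₂ t x y z) ^ 2 + (u₃ t x y z) ^ 2) t x y z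
        + pX P t x y z / ρ + pX φ t x y z = 0)
    (hbern₂ : ∀ t x y z : ℝ,
      (1 / 2) * pY (fun t x y z =>
          (u₁ t x y z) ^ 2 + (u₂ t x y z) ^ 2 + (u₃ t x y z) ^ 2) t x y z
        + pY P t x y z / ρ + pY φ t x y z = 0)
    (hbern₃ : ∀ t x y z : ℝ,
      (1 / 2) * pZ (fun t x y z =>
          (u₁ t x y z) ^ 2 + (u₂ t x y z) ^ 2 + (u₃ t x y z) ^ 2) t x y z
        + pZ P t x y z / ρ + pZ φ t x y z = 0)
    -- (iii) `∂u_p/∂t = u_p × w + u_w × w`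
    (hrot₁ : ∀ t x y z : ℝ,
      pT up₁ t x y z =
        (up₂ t x y z * w₃ t x y z - up₃ t x y z * w₂ t x y z)
          + (uw₂ t x y z * w₃ t x y z - uw₃ t x y z * w₂ t x y z))
    (hrot₂ : ∀ t x y z : ℝ,
      pT up₂ t x y z =
        (up₃ t x y z * w₁ t x y z - up₁ t x y z * w₃ t x y z)
          + (uw₃ t x y z * w₁ t x y z - uw₁ t x y z * w₃ t x y z))
    (hrot₃ : ∀ t x y z : ℝ,
      pT up₃ t x y z =
        (up₁ t x y z * w₂ t x y z - up₂ t x y z * w₁ t x y z)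
          + (uw₁ t x y z * w₂ t x y z - uw₂ t x y z * w₁ t x y z))
    -- (iv) `∂u_w/∂t = ν·∇²u_w`
    (hdiff₁ : ∀ t x y z : ℝ, pT uw₁ t x y z = ν * lap uw₁ t x y z)
    (hdiff₂ : ∀ t x y z : ℝ, pT uw₂ t x y z = ν * lap uw₂ t x y z)
    (hdiff₃ : ∀ t x y z : ℝ, pT uw₃ t x y z = ν * lap uw₃ t x y z) :
    (∀ t x y z : ℝ,
      pT u₁ t x y z
          + (u₁ t x y z * pX u₁ t x y z + u₂ t x y z * pY u₁ t x y z
              + u₃ t x y z * pZ u₁ t x y z) =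
        -(pX P t x y z / ρ) + ν * lap u₁ t x y z - pX φ t x y z) ∧
    (∀ t x y z : ℝ,
      pT u₂ t x y z
          + (u₁ t x y z * pX u₂ t x y z + u₂ t x y z * pY u₂ t x y z
              + u₃ t x y z * pZ u₂ t x y z) =
        -(pY P t x y z / ρ) + ν * lap u₂ t x y z - pY φ t x y z) ∧
    (∀ t x y z : ℝ,
      pT u₃ t x y z
          + (u₁ t x y z * pX u₃ t x y z + u₂ t x y z * pY u₃ t x y z
              + u₃ t x y z * pZ u₃ t x y z) =
        -(pZ P t x y z / ρ) + ν * lap u₃ t x y z - pZ φ t x y z) ∧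
    (∀ t x y z : ℝ,
      pX u₁ t x y z + pY u₂ t x y z + pZ u₃ t x y z = 0) :=
  decomposition_solves_navier_stokes_general ρ ν up₁ up₂ up₃ uw₁ uw₂ uw₃ P φ hup₁ hup₂ hup₃ huw₁
    huw₂ huw₃ u₁ u₂ u₃ hu₁ hu₂ hu₃ w₁ w₂ w₃ hw₁ hw₂ hw₃ hcurlp₁ hcurlp₂ hcurlp₃ hdivp hdivw hbern₁
    hbern₂ hbern₃ hrot₁ hrot₂ hrot₃ hdiff₁ hdiff₂ hdiff₃
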